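/- arXiv:1401.2290 — 2 statements merged into one kernel-verified Lean document; each statement's English description precedes it below -/
import Mathlib

section
/- Let X be a k-dimensional simplicial complex on a finite vertex set V with Z_{k−1}(X;ℝ) ≠ {0}, suppose h(X) < ∞, let A_0,…,A_k be a partition of V into nonempty parts attaining the minimum in h(X), and let C(X) = max over τ ∈ F^∂(A_0,…,A_k) of Σ_{v∈τ} d(τ∖{v}). If every (k−1)-face of X is contained in at most C faces of dimension k of the completion K(X), then C(X) ≤ (k+1)·C, and consequently λ(X) ≤ ((k+1)·C/|V|)·h(X). -/
open Finset

namespace HigherCheeger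

variable {V : Type*} [DecidableEq V] [Fintype V] [LinearOrder V]

/-- An abstract simplicial complex: a family of finite subsets of `V`
closed under taking subsets. -/
def IsComplex (X : Finset (Finset V)) : Prop :=
  ∀ σ ∈ X, ∀ τ ⊆ σ, τ ∈ X

/-- `X` is `k`-dimensional: every face has at most `k+1` vertices
and some face has exactly `k+1` vertices. -/
def IsDim (X : Finset (Finset V)) (k : ℕ) : Prop :=
  (∀ σ ∈ X, σ.card ≤ k + 1) ∧ ∃ σ ∈ X, σ.card = k + 1

/-- The faces of `X` of cardinality `c` (i.e. of dimension `c - 1`). -/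
def faces (X : Finset (Finset V)) (c : ℕ) : Finset (Finset V) :=
  X.filter fun σ => σ.card = c

/-- `X` has complete `(k-1)`-skeleton: every subset of `V` of size at most `k` is a face. -/
def CompleteSkeleton (X : Finset (Finset V)) (k : ℕ) : Prop :=
  ∀ σ : Finset V, σ.card ≤ k → σ ∈ X

/-- The `k`-dimensional completion `K(X)`. -/
def completion (X : Finset (Finset V)) (k : ℕ) : Finset (Finset V) :=
  X ∪ (Finset.univ.filter fun τ : Finset V => τ.card = k + 1 ∧ ∀ v ∈ τ, τ.erase v ∈ X)

/-- The complete `k`-dimensional complex `K_n^k` on the vertex set `V`. -/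
def completeComplex (V : Type*) [DecidableEq V] [Fintype V] (k : ℕ) : Finset (Finset V) :=
  Finset.univ.filter fun σ : Finset V => σ.card ≤ k + 1

/-- The oriented incidence number `[τ:σ]` (with respect to the linear order on `V`):
`(-1)^j` if `σ = τ \ {v_j}` where `v_j` is the `j`-th smallest vertex of `τ`, and `0` otherwise. -/
def incidence (τ σ : Finset V) : ℝ :=
  if σ ⊆ τ ∧ σ.card + 1 = τ.card then
    ∑ v ∈ τ \ σ, (-1 : ℝ) ^ (τ.filter fun w => w < v).card
  else 0

/-- The real coboundary operator `δ` applied to a cochain living on the faces of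
cardinality `c`; the result lives on faces of cardinality `c + 1`. -/
def delta (X : Finset (Finset V)) (c : ℕ) (f : Finset V → ℝ) : Finset V → ℝ :=
  fun τ => ∑ σ ∈ faces X c, incidence τ σ * f σ

/-- The real boundary operator `∂` (the adjoint of `δ`) applied to a cochain living
on the faces of cardinality `c`; the result lives on faces of cardinality `c - 1`. -/
def bdry (X : Finset (Finset V)) (c : ℕ) (f : Finset V → ℝ) : Finset V → ℝ :=
  fun σ => ∑ τ ∈ faces X c, incidence τ σ * f τ

/-- The inner product of two cochains on the faces of cardinality `c`. -/
def inn (X : Finset (Finset V)) (c : ℕ) (f g : Finset V → ℝ) : ℝ :=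
  ∑ σ ∈ faces X c, f σ * g σ

/-- The upper Laplacian `L^up_{k-1} = ∂_k δ_{k-1}` acting on `(k-1)`-cochains
(functions on faces of cardinality `k`). -/
def lapUp (X : Finset (Finset V)) (k : ℕ) (f : Finset V → ℝ) : Finset V → ℝ :=
  bdry X (k + 1) (delta X k f)

/-- The lower Laplacian `L^down_{k-1} = δ_{k-2} ∂_{k-1}` acting on `(k-1)`-cochains. -/
def lapDown (X : Finset (Finset V)) (k : ℕ) (f : Finset V → ℝ) : Finset V → ℝ :=
  delta X (k - 1) (bdry X k f)

/-- `f ∈ Z_{k-1}(X;ℝ) = ker ∂_{k-1}`. -/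
def IsCycle (X : Finset (Finset V)) (k : ℕ) (f : Finset V → ℝ) : Prop :=
  ∀ σ : Finset V, bdry X k f σ = 0

/-- `f ∈ B^{k-1}(X;ℝ) = im δ_{k-2}` (as a cochain, i.e. on the `(k-1)`-faces). -/
def IsCobdry (X : Finset (Finset V)) (k : ℕ) (f : Finset V → ℝ) : Prop :=
  ∃ g : Finset V → ℝ, ∀ σ ∈ faces X k, f σ = delta X (k - 1) g σ

/-- The spectral gap `λ(X)`: the minimum of the Rayleigh quotient
`⟨L^up_{k-1}(X) f, f⟩ / ⟨f, f⟩` over nonzero `f ∈ Z_{k-1}(X;ℝ)`. -/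
noncomputable def spectralGap (X : Finset (Finset V)) (k : ℕ) : ℝ :=
  sInf {r : ℝ | ∃ f : Finset V → ℝ, IsCycle X k f ∧ inn X k f f ≠ 0 ∧
    r = inn X k (lapUp X k f) f / inn X k f f}

/-- A partition of `V` into `m` (nonempty) parts. -/
def IsPartition {m : ℕ} (A : Fin m → Finset V) : Prop :=
  (∀ i, (A i).Nonempty) ∧ ∀ v : V, ∃! i, v ∈ A i

/-- The linear order on `V` is adapted to the family of parts `A`. -/
def OrderAdapted {m : ℕ} (A : Fin m → Finset V) : Prop :=
  ∀ i j : Fin m, i < j → ∀ v ∈ A i, ∀ w ∈ A j, v < w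

/-- `F(A_0,…,A_k)`: the `k`-faces of `X` with exactly one vertex in each part. -/
def Fset (X : Finset (Finset V)) (k : ℕ) (A : Fin (k + 1) → Finset V) : Finset (Finset V) :=
  (faces X (k + 1)).filter fun τ => ∀ i, (τ ∩ A i).card = 1

/-- `F^∂(A_0,…,A_k)`: the `(k+1)`-element members of `K(X)` with exactly one vertex
in each part. -/
def Fpar (X : Finset (Finset V)) (k : ℕ) (A : Fin (k + 1) → Finset V) : Finset (Finset V) :=
  (faces (completion X k) (k + 1)).filter fun τ => ∀ i, (τ ∩ A i).card = 1

/-- The value `|V|·|F(A_0,…,A_k)| / |F^∂(A_0,…,A_k)|` of a partition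
(`⊤` if the denominator is `0`). -/
noncomputable def cheegerVal (X : Finset (Finset V)) (k : ℕ) (A : Fin (k + 1) → Finset V) :
    EReal :=
  if (Fpar X k A).card = 0 then ⊤
  else (((Fintype.card V * (Fset X k A).card : ℝ) / ((Fpar X k A).card : ℝ) : ℝ) : EReal)

/-- The Cheeger constant `h(X)`. -/
noncomputable def cheeger (X : Finset (Finset V)) (k : ℕ) : EReal :=
  sInf {r : EReal | ∃ A : Fin (k + 1) → Finset V, IsPartition A ∧ r = cheegerVal X k A}

/-- `d(σ)`: the number of members of `F^∂(A_0,…,A_k)` containing `σ`. -/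
def degPar (X : Finset (Finset V)) (k : ℕ) (A : Fin (k + 1) → Finset V) (σ : Finset V) : ℕ :=
  ((Fpar X k A).filter fun τ => σ ⊆ τ).card

/-- `C(X)` (with respect to the partition `A`):
the maximum over `τ ∈ F^∂(A_0,…,A_k)` of `∑_{v ∈ τ} d(τ \ {v})`. -/
def Cconst (X : Finset (Finset V)) (k : ℕ) (A : Fin (k + 1) → Finset V) : ℕ :=
  (Fpar X k A).sup fun τ => ∑ v ∈ τ, degPar X k A (τ.erase v)

/-- The cochain associated to a partition `A`: `σ ↦ (-1)^l·|A_l|` if `A_l` is the unique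
part disjoint from `σ`, and `0` otherwise. -/
def assocCochain {k : ℕ} (A : Fin (k + 1) → Finset V) (σ : Finset V) : ℝ :=
  if (Finset.univ.filter fun l => σ ∩ A l = ∅).card = 1 then
    ∑ l ∈ Finset.univ.filter fun l => σ ∩ A l = ∅, (-1 : ℝ) ^ (l : ℕ) * ((A l).card : ℝ)
  else 0

/-- The `Z₂`-coboundary: a `(c-1)`-cochain `f` is sent to
`τ ↦ ∑_{v ∈ τ} f (τ \ {v})`. -/
def deltaZ2 (f : Finset V → ZMod 2) (τ : Finset V) : ZMod 2 :=
  ∑ v ∈ τ, f (τ.erase v)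

/-- The support of the `Z₂`-coboundary of `f` in `X`: the faces of `X` of cardinality
`k + 1` on which the `Z₂`-coboundary of `f` is nonzero.  Its cardinality is `|δ_X f|`. -/
def suppDelta (X : Finset (Finset V)) (k : ℕ) (f : Finset V → ZMod 2) : Finset (Finset V) :=
  (faces X (k + 1)).filter fun τ => deltaZ2 f τ ≠ 0

/-- `F(A_0,…,A_{k-1})`: the `(k-1)`-faces of `X` with exactly one vertex in each of
the `k` parts. -/
def FsetLow (X : Finset (Finset V)) (k : ℕ) (A : Fin k → Finset V) : Finset (Finset V) :=
  (faces X k).filter fun σ => ∀ i, (σ ∩ A i).card = 1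

/-- The Cheeger-type constant `h'(X)`. -/
noncomputable def cheeger' (X : Finset (Finset V)) (k : ℕ) : EReal :=
  sInf {r : EReal | ∃ (A : Fin k → Finset V) (f : Finset V → ZMod 2),
    IsPartition A ∧ (∀ σ, f σ ≠ 0 → σ ∈ FsetLow X k A) ∧
    r = if (suppDelta (completion X k) k f).card = 0 then (⊤ : EReal)
        else (((Fintype.card V * (suppDelta X k f).card : ℝ) /
              ((suppDelta (completion X k) k f).card : ℝ) : ℝ) : EReal)}

/-- The Hamming norm of a `Z₂`-cochain on the faces of cardinality `c`. -/
def hamming (X : Finset (Finset V)) (c : ℕ) (f : Finset V → ZMod 2) : ℕ :=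
  ((faces X c).filter fun σ => f σ ≠ 0).card

/-- `|[f]|`: the minimum Hamming norm of `f + δ_X g` over `g ∈ C^{k-2}(X;Z₂)`. -/
noncomputable def normClass (X : Finset (Finset V)) (k : ℕ) (f : Finset V → ZMod 2) : ℕ :=
  sInf {m : ℕ | ∃ g : Finset V → ZMod 2, m = hamming X k fun σ => f σ + deltaZ2 g σ}

/-- The coboundary expansion `φ(X) = min_f |δ_X f| / |[f]|` (quotients with denominator
`0` are `∞`). -/
noncomputable def phi (X : Finset (Finset V)) (k : ℕ) : EReal :=
  sInf {r : EReal | ∃ f : Finset V → ZMod 2,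
    r = if normClass X k f = 0 then (⊤ : EReal)
        else ((((suppDelta X k f).card : ℝ) / (normClass X k f : ℝ) : ℝ) : EReal)}

/-- `h̃(X) = min_f |V|·|δ_X f| / |δ_{K(X)} f|` (quotients with denominator `0` are `∞`). -/
noncomputable def htilde (X : Finset (Finset V)) (k : ℕ) : EReal :=
  sInf {r : EReal | ∃ f : Finset V → ZMod 2,
    r = if (suppDelta (completion X k) k f).card = 0 then (⊤ : EReal)
        else (((Fintype.card V * (suppDelta X k f).card : ℝ) /
              ((suppDelta (completion X k) k f).card : ℝ) : ℝ) : EReal)}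


end HigherCheeger

/-!
Label every vertex by its part and let `f` be the `(k-1)`-cochain that is `±(-1)^l |A_l|` on the
faces meeting every part except `A_l`. On each `k`-face of `K(X)`, `δf` is `±|V|` if the face
meets every part and `0` otherwise. Projecting `f` orthogonally onto `Z_{k-1} = (B^{k-1})ᗮ`
changes it by a coboundary, hence does not change `δf`; call the projection `g`. Then
`⟨L^up g, g⟩ = ‖δg‖² = |V|² |F|`. Pairing `δg` with the signs on `F^∂` and applying
Cauchy–Schwarz against the degrees gives `(|V| |F^∂|)² ≤ ‖g‖² ∑_σ d(σ)² ≤ ‖g‖² C(X) |F^∂|`,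
so `λ(X) ≤ C(X)/|V| · h(X)`. Under the degree bound each of the `k+1` facets of a face of `F^∂`
has `d ≤ C`, so `C(X) ≤ (k+1) C`.
-/

namespace HigherCheeger

section Coboundary

lemma exists_erase_eq {V : Type*} [DecidableEq V] {σ τ : Finset V} (h : σ ⊆ τ ∧ #σ + 1 = #τ) :
    ∃ v ∈ τ, τ.erase v = σ :=
  (covBy_iff_exists_insert.2 (exists_eq_insert_iff.2 h)).exists_finset_erase

variable {V : Type*} [DecidableEq V] [LinearOrder V]

def facetSign (τ : Finset V) (v : V) : ℝ :=
  (-1) ^ #{w ∈ τ | w < v}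

lemma incidence_erase {τ : Finset V} {v : V} (hv : v ∈ τ) :
    incidence τ (τ.erase v) = facetSign τ v := by
  rw [incidence, if_pos ⟨erase_subset v τ, card_erase_add_one hv⟩, sdiff_erase_self hv,
    sum_singleton, facetSign]

lemma incidence_eq_zero {τ σ : Finset V} (h : ¬(σ ⊆ τ ∧ #σ + 1 = #τ)) : incidence τ σ = 0 :=
  if_neg h

lemma abs_incidence_le (τ σ : Finset V) : |incidence τ σ| ≤ if σ ⊆ τ then 1 else 0 := by
  by_cases h : σ ⊆ τ ∧ #σ + 1 = #τ
  · obtain ⟨v, hv, rfl⟩ := exists_erase_eq h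
    simp [incidence_erase hv, facetSign, erase_subset]
  · rw [incidence_eq_zero h]
    split_ifs <;> norm_num

lemma incidence_eq_sum (σ ρ : Finset V) :
    incidence σ ρ = ∑ x ∈ σ, if σ.erase x = ρ then facetSign σ x else 0 := by
  by_cases h : ρ ⊆ σ ∧ #ρ + 1 = #σ
  · obtain ⟨v, hv, rfl⟩ := exists_erase_eq h
    rw [incidence_erase hv, sum_eq_single_of_mem v hv (fun x hx hxv => if_neg
      fun hxv' => hxv (erase_injOn σ hx hv hxv')), if_pos rfl]
  · rw [incidence_eq_zero h]
    refine (sum_eq_zero fun x hx => if_neg ?_).symm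
    rintro rfl
    exact h ⟨erase_subset x σ, card_erase_add_one hx⟩

lemma facetSign_erase {τ : Finset V} {u v : V} (hu : u ∈ τ) :
    facetSign (τ.erase u) v = (if u < v then -1 else 1) * facetSign τ v := by
  rw [facetSign, facetSign, filter_erase]
  split_ifs with h
  · rw [← card_erase_add_one (mem_filter.2 ⟨hu, h⟩), pow_succ]
    ring
  · have hu' : u ∉ {w ∈ τ | w < v} := fun hu' => h (mem_filter.1 hu').2
    rw [erase_eq_of_notMem hu', one_mul]

lemma sum_sum_erase_eq_zero_of_antisymm {α : Type*} [DecidableEq α] (s : Finset α)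
    (F : α → α → ℝ) (hF : ∀ a ∈ s, ∀ b ∈ s, a ≠ b → F b a = -F a b) :
    ∑ a ∈ s, ∑ b ∈ s.erase a, F a b = 0 := by
  have hswap : ∑ a ∈ s, ∑ b ∈ s.erase a, F a b = ∑ b ∈ s, ∑ a ∈ s.erase b, F a b :=
    sum_comm' fun a b => by simp only [mem_erase]; tauto
  have hneg : ∑ b ∈ s, ∑ a ∈ s.erase b, F a b = -∑ b ∈ s, ∑ a ∈ s.erase b, F b a := by
    simp only [← sum_neg_distrib]
    exact sum_congr rfl fun b hb => sum_congr rfl fun a ha =>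
      hF b hb a (mem_of_mem_erase ha) (ne_of_mem_erase ha).symm
  linarith

/-- `∂∂ = 0`: erasing `u` then `w` and erasing `w` then `u` contribute with opposite signs. -/
lemma sum_facetSign_mul_incidence_erase (τ ρ : Finset V) :
    ∑ v ∈ τ, facetSign τ v * incidence (τ.erase v) ρ = 0 := by
  simp only [incidence_eq_sum, mul_sum, mul_ite, mul_zero]
  refine sum_sum_erase_eq_zero_of_antisymm τ _ fun u hu w hw huw => ?_
  rw [erase_right_comm, facetSign_erase hu, facetSign_erase hw]
  split_ifs <;> first | order | ring

lemma delta_eq_sum_erase (X : Finset (Finset V)) (c : ℕ) (f : Finset V → ℝ) {τ : Finset V}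
    (hτ : #τ = c + 1) (hfac : ∀ v ∈ τ, τ.erase v ∈ X) :
    delta X c f τ = ∑ v ∈ τ, facetSign τ v * f (τ.erase v) := by
  have hsub : τ.image τ.erase ⊆ faces X c := by
    intro σ hσ
    obtain ⟨v, hv, rfl⟩ := mem_image.1 hσ
    exact mem_filter.2 ⟨hfac v hv, by have := card_erase_add_one hv; omega⟩
  rw [delta, ← sum_subset hsub, sum_image (erase_injOn τ)]
  · exact sum_congr rfl fun v hv => by rw [incidence_erase hv]
  · intro σ _ hσ
    rw [incidence_eq_zero, zero_mul]
    intro h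
    obtain ⟨v, hv, rfl⟩ := exists_erase_eq h
    exact hσ (mem_image_of_mem _ hv)

lemma delta_delta_eq_zero (X : Finset (Finset V)) (c c' : ℕ) (h : Finset V → ℝ)
    {τ : Finset V} (hτ : #τ = c + 1) (hfac : ∀ v ∈ τ, τ.erase v ∈ X) :
    delta X c (delta X c' h) τ = 0 := by
  rw [delta_eq_sum_erase X c _ hτ hfac]
  simp only [delta, mul_sum, ← mul_assoc]
  rw [sum_comm]
  exact sum_eq_zero fun ρ _ => by rw [← sum_mul, sum_facetSign_mul_incidence_erase, zero_mul]

def deltaLinearMap (X : Finset (Finset V)) (c : ℕ) : (Finset V → ℝ) →ₗ[ℝ] Finset V → ℝ where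
  toFun := delta X c
  map_add' f g := by
    ext τ
    simp only [delta, Pi.add_apply, mul_add, sum_add_distrib]
  map_smul' r f := by
    ext τ
    simp only [delta, Pi.smul_apply, smul_eq_mul, RingHom.id_apply, mul_sum, mul_left_comm]

lemma delta_sub (X : Finset (Finset V)) (c : ℕ) (f g : Finset V → ℝ) :
    delta X c (f - g) = delta X c f - delta X c g :=
  map_sub (deltaLinearMap X c) f g

lemma inn_bdry_eq_inn_delta (X : Finset (Finset V)) (c : ℕ) (G f : Finset V → ℝ) :
    inn X c (bdry X (c + 1) G) f = inn X (c + 1) G (delta X c f) := by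
  simp only [inn, bdry, delta, sum_mul, mul_sum]
  rw [sum_comm]
  exact sum_congr rfl fun τ _ => sum_congr rfl fun σ _ => by ring

lemma inn_lapUp_self (X : Finset (Finset V)) (k : ℕ) (f : Finset V → ℝ) :
    inn X k (lapUp X k f) f = inn X (k + 1) (delta X k f) (delta X k f) :=
  inn_bdry_eq_inn_delta X k _ f

lemma bdry_eq_zero_of_notMem_faces {X : Finset (Finset V)} (hX : IsComplex X) {c : ℕ}
    {σ : Finset V} (hσ : σ ∉ faces X (c - 1)) (f : Finset V → ℝ) : bdry X c f σ = 0 := by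
  refine sum_eq_zero fun τ hτ => ?_
  rw [incidence_eq_zero, zero_mul]
  rintro ⟨hsub, hcard⟩
  obtain ⟨hτX, hτc⟩ := mem_filter.1 hτ
  exact hσ (mem_filter.2 ⟨hX τ hτX σ hsub, by omega⟩)

lemma delta_single {X : Finset (Finset V)} {c : ℕ} {σ : Finset V} (hσ : σ ∈ faces X c)
    (τ : Finset V) : delta X c (Pi.single σ 1) τ = incidence τ σ := by
  simp [delta, Pi.single_apply, hσ]

lemma isCycle_of_forall_inn_delta_eq_zero {X : Finset (Finset V)} (hX : IsComplex X) {k : ℕ}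
    {g : Finset V → ℝ} (hg : ∀ e, inn X k (delta X (k - 1) e) g = 0) : IsCycle X k g := by
  intro σ
  by_cases hσ : σ ∈ faces X (k - 1)
  · rw [← hg (Pi.single σ 1)]
    simp only [bdry, inn, delta_single hσ]
  · exact bdry_eq_zero_of_notMem_faces hX hσ g

/-- Orthogonal projection onto `Z_{k-1} = (B^{k-1})ᗮ`, inside `ℓ²` of the `(k-1)`-faces. -/
lemma exists_isCycle_sub_delta {X : Finset (Finset V)} (hX : IsComplex X) (k : ℕ)
    (f : Finset V → ℝ) : ∃ h, IsCycle X k (f - delta X (k - 1) h) := by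
  let res : (Finset V → ℝ) →ₗ[ℝ] EuclideanSpace ℝ (faces X k) :=
    (WithLp.linearEquiv 2 ℝ _).symm.toLinearMap ∘ₗ LinearMap.funLeft ℝ ℝ Subtype.val
  have inner_res (a b : Finset V → ℝ) : inner ℝ (res a) (res b) = inn X k a b := by
    rw [PiLp.inner_apply, inn, univ_eq_attach]
    exact (sum_congr rfl fun σ _ => by simp [res, mul_comm]).trans (sum_attach _ fun σ => a σ * b σ)
  let B := LinearMap.range (res ∘ₗ deltaLinearMap X (k - 1))
  obtain ⟨_, ⟨h, rfl⟩, z, hz, hf⟩ := B.exists_add_mem_mem_orthogonal (res f)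
  refine ⟨h, isCycle_of_forall_inn_delta_eq_zero hX fun e => ?_⟩
  have hres : res (f - delta X (k - 1) h) = z := by
    rw [map_sub, hf]
    simp [deltaLinearMap]
  rw [← inner_res, hres]
  exact (Submodule.mem_orthogonal B z).1 hz _ (LinearMap.mem_range_self _ e)

end Coboundary

section LabelCochain

def inversions {V : Type*} [LinearOrder V] {m : ℕ} (p : V → Fin m) (σ : Finset V) : ℕ :=
  ∑ u ∈ σ, #{w ∈ σ | u < w ∧ p w < p u}

lemma card_lt_add_card_gt_label {V : Type*} [LinearOrder V] {m : ℕ} (p : V → Fin m)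
    (τ : Finset V) (v : V) :
    #{x ∈ τ | x < v} + #{x ∈ τ | v < x ∧ p x < p v} =
      #{x ∈ τ | p x < p v} + #{x ∈ τ | x < v ∧ p x = p v} + #{x ∈ τ | x < v ∧ p v < p x} := by
  simp only [card_filter, ← sum_add_distrib]
  refine sum_congr rfl fun x _ => ?_
  rcases lt_trichotomy x v with h | rfl | h
  · rcases lt_trichotomy (p x) (p v) with h' | h' | h'
    · simp [h, h', h'.ne, h'.le, h.not_gt]
    · simp [h, h', h.not_gt]
    · simp [h, h', h'.ne', h'.not_gt, h.not_gt]
  · simp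
  · simp [h, h.not_gt]

lemma image_erase_of_label_eq {V : Type*} [DecidableEq V] {m : ℕ} (p : V → Fin m)
    {τ : Finset V} {u w : V} (hw : w ∈ τ) (huw : u ≠ w) (hp : p u = p w) :
    (τ.erase u).image p = τ.image p := by
  refine (image_subset_image (erase_subset u τ)).antisymm fun l hl => ?_
  obtain ⟨x, hx, rfl⟩ := mem_image.1 hl
  by_cases hxu : x = u
  · exact mem_image.2 ⟨w, mem_erase.2 ⟨huw.symm, hw⟩, by rw [hxu, hp]⟩
  · exact mem_image_of_mem p (mem_erase.2 ⟨hxu, hx⟩)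

variable {V : Type*} [DecidableEq V] [LinearOrder V] {m : ℕ}

lemma inversions_erase (p : V → Fin m) {τ : Finset V} {v : V} (hv : v ∈ τ) :
    inversions p τ = inversions p (τ.erase v) + #{x ∈ τ | x < v ∧ p v < p x} +
      #{x ∈ τ | v < x ∧ p x < p v} := by
  obtain ⟨s, hvs, rfl⟩ : ∃ s, v ∉ s ∧ insert v s = τ :=
    ⟨τ.erase v, notMem_erase v τ, insert_erase hv⟩
  simp only [inversions, erase_insert hvs, card_filter, sum_insert hvs, lt_irrefl, false_and,
    if_false, sum_add_distrib]
  ring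

lemma facetSign_mul_neg_one_pow_inversions_erase (p : V → Fin m) {τ : Finset V} {v : V}
    (hv : v ∈ τ) :
    facetSign τ v * (-1) ^ inversions p (τ.erase v) =
      (-1) ^ inversions p τ * (-1) ^ (#{x ∈ τ | p x < p v} + #{x ∈ τ | x < v ∧ p x = p v}) := by
  have hparity : inversions p τ + (#{x ∈ τ | p x < p v} + #{x ∈ τ | x < v ∧ p x = p v}) =
      #{x ∈ τ | x < v} + inversions p (τ.erase v) + 2 * #{x ∈ τ | v < x ∧ p x < p v} := by
    have := inversions_erase p hv
    have := card_lt_add_card_gt_label p τ v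
    omega
  rw [facetSign, ← pow_add, ← pow_add, hparity, pow_add _ _ (2 * _), pow_mul, neg_one_sq, one_pow,
    mul_one]

/-- With `a l = |A_l|` this is `assocCochain A` on the `(k-1)`-faces, twisted by
`(-1)^inversions`, which makes up for the order on `V` not being adapted to the parts. -/
def labelCochain (p : V → Fin m) (a : Fin m → ℝ) (σ : Finset V) : ℝ :=
  if #(σ.image p) = #σ then
    (-1) ^ inversions p σ * ∑ l ∈ univ \ σ.image p, (-1) ^ (l : ℕ) * a l
  else 0

lemma sum_facetSign_mul_labelCochain_erase_of_injOn {k : ℕ} (p : V → Fin (k + 1))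
    (a : Fin (k + 1) → ℝ) {τ : Finset V} (hτ : #τ = k + 1) (hinj : Set.InjOn p τ) :
    ∑ v ∈ τ, facetSign τ v * labelCochain p a (τ.erase v) = (-1) ^ inversions p τ * ∑ l, a l := by
  have himg : τ.image p = univ :=
    eq_univ_of_card _ (by rw [card_image_of_injOn hinj, hτ, Fintype.card_fin])
  have hterm (v : V) (hv : v ∈ τ) :
      facetSign τ v * labelCochain p a (τ.erase v) = (-1) ^ inversions p τ * a (p v) := by
    have hinj' : Set.InjOn p (τ.erase v) := hinj.mono (coe_subset.2 (erase_subset v τ))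
    have hmissing : univ \ (τ.erase v).image p = {p v} := by
      rw [erase_eq, image_sdiff_of_injOn hinj (singleton_subset_iff.2 hv), himg, image_singleton]
      simp
    have hlt : #{x ∈ τ | p x < p v} = p v := by
      rw [← card_image_of_injOn (hinj.mono (coe_subset.2 (filter_subset _ τ))), ← Fin.card_Iio]
      congr 1
      ext l
      simp only [mem_image, mem_filter, mem_Iio]
      constructor
      · rintro ⟨x, ⟨-, hx⟩, rfl⟩
        exact hx
      · intro hl
        obtain ⟨x, hx, rfl⟩ := mem_image.1 (himg ▸ mem_univ l)
        exact ⟨x, ⟨hx, hl⟩, rfl⟩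
    have heq : #{x ∈ τ | x < v ∧ p x = p v} = 0 :=
      card_eq_zero.2 (filter_eq_empty_iff.2 fun x hx h => h.1.ne (hinj hx hv h.2))
    rw [labelCochain, if_pos (card_image_iff.2 hinj'), hmissing, sum_singleton, ← mul_assoc,
      facetSign_mul_neg_one_pow_inversions_erase p hv, hlt, heq, add_zero, mul_assoc,
      ← mul_assoc ((-1) ^ (p v : ℕ)), ← pow_add, ← two_mul, pow_mul]
    norm_num
  rw [sum_congr rfl hterm, ← mul_sum, ← sum_image fun x hx y hy => hinj hx hy, himg]

/-- The two vertices `u < w` of a label collision: `u` comes first among the vertices of its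
label, `w` second, so their terms in `δ` have opposite signs. -/
lemma facetSign_mul_labelCochain_erase_add_of_label_eq (p : V → Fin m) (a : Fin m → ℝ)
    {τ : Finset V} {u w : V} (hu : u ∈ τ) (hw : w ∈ τ) (huw : u < w) (hp : p u = p w) :
    facetSign τ u * labelCochain p a (τ.erase u) +
      facetSign τ w * labelCochain p a (τ.erase w) = 0 := by
  have hcard : #(τ.erase u) = #(τ.erase w) := by rw [card_erase_of_mem hu, card_erase_of_mem hw]
  simp only [labelCochain, image_erase_of_label_eq p hw huw.ne hp,
    image_erase_of_label_eq p hu huw.ne' hp.symm, hcard]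
  split_ifs with hinj
  · have hinj_u : Set.InjOn p (τ.erase u) := card_image_iff.1 <| by
      rw [image_erase_of_label_eq p hw huw.ne hp, hinj, hcard]
    have hinj_w : Set.InjOn p (τ.erase w) := card_image_iff.1 <| by
      rw [image_erase_of_label_eq p hu huw.ne' hp.symm, hinj]
    have hfirst : #{x ∈ τ | x < u ∧ p x = p u} = 0 := by
      refine card_eq_zero.2 (filter_eq_empty_iff.2 fun x hx h => ?_)
      have := hinj_u (mem_erase.2 ⟨h.1.ne, hx⟩) (mem_erase.2 ⟨huw.ne', hw⟩) (h.2.trans hp)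
      exact (h.1.trans huw).ne this
    have hsecond : #{x ∈ τ | x < w ∧ p x = p w} = 1 := by
      refine card_eq_one.2 ⟨u, eq_singleton_iff_unique_mem.2 ⟨mem_filter.2 ⟨hu, huw, hp⟩, ?_⟩⟩
      intro x hx
      obtain ⟨hxτ, hxw, hpx⟩ := mem_filter.1 hx
      exact hinj_w (mem_erase.2 ⟨hxw.ne, hxτ⟩) (mem_erase.2 ⟨huw.ne, hu⟩) (hpx.trans hp.symm)
    rw [← mul_assoc, ← mul_assoc, facetSign_mul_neg_one_pow_inversions_erase p hu,
      facetSign_mul_neg_one_pow_inversions_erase p hw, hfirst, hsecond, hp, pow_succ]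
    ring
  · simp

lemma sum_facetSign_mul_labelCochain_erase_of_not_injOn (p : V → Fin m) (a : Fin m → ℝ)
    {τ : Finset V} (hinj : ¬Set.InjOn p τ) :
    ∑ v ∈ τ, facetSign τ v * labelCochain p a (τ.erase v) = 0 := by
  obtain ⟨u, hu, w, hw, huw, hp⟩ : ∃ u ∈ τ, ∃ w ∈ τ, u < w ∧ p u = p w := by
    simp only [Set.InjOn, not_forall] at hinj
    obtain ⟨x, hx, y, hy, hxy, hne⟩ := hinj
    rcases lt_or_gt_of_ne hne with h | h
    exacts [⟨x, hx, y, hy, h, hxy⟩, ⟨y, hy, x, hx, h, hxy.symm⟩]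
  have hrest (v : V) (hv : v ∈ τ) (hvuw : v ∉ ({u, w} : Finset V)) :
      facetSign τ v * labelCochain p a (τ.erase v) = 0 := by
    simp only [mem_insert, mem_singleton, not_or] at hvuw
    rw [labelCochain, if_neg, mul_zero]
    rw [card_image_iff]
    exact fun hinj' => huw.ne (hinj' (mem_erase.2 ⟨Ne.symm hvuw.1, hu⟩)
      (mem_erase.2 ⟨Ne.symm hvuw.2, hw⟩) hp)
  rw [← sum_subset (insert_subset hu (singleton_subset_iff.2 hw)) hrest, sum_pair huw.ne]
  exact facetSign_mul_labelCochain_erase_add_of_label_eq p a hu hw huw hp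

end LabelCochain

section Partition

lemma IsPartition.exists_label {V : Type*} {m : ℕ} {A : Fin m → Finset V} (hA : IsPartition A) :
    ∃ p : V → Fin m, ∀ v i, v ∈ A i ↔ p v = i := by
  choose p hp using hA.2
  exact ⟨p, fun v i => ⟨fun h => ((hp v).2 i h).symm, fun h => h ▸ (hp v).1⟩⟩

lemma sum_card_eq_card_of_label {V : Type*} [Fintype V] {m : ℕ} {A : Fin m → Finset V}
    {p : V → Fin m} (hp : ∀ v i, v ∈ A i ↔ p v = i) : ∑ i, #(A i) = Fintype.card V := by
  rw [← card_univ, card_eq_sum_card_fiberwise fun v _ => mem_univ (p v)]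
  exact sum_congr rfl fun i _ => congrArg card (ext fun v => by simp [hp])

lemma forall_card_inter_eq_one_iff {V : Type*} [DecidableEq V] {k : ℕ}
    {A : Fin (k + 1) → Finset V} {p : V → Fin (k + 1)} (hp : ∀ v i, v ∈ A i ↔ p v = i)
    {τ : Finset V} (hτ : #τ = k + 1) : (∀ i, #(τ ∩ A i) = 1) ↔ Set.InjOn p τ := by
  constructor
  · intro h x hx y hy hxy
    exact card_le_one.1 (h (p x)).le x (mem_inter.2 ⟨hx, (hp x _).2 rfl⟩) y
      (mem_inter.2 ⟨hy, (hp y _).2 hxy.symm⟩)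
  · intro hinj i
    have himg : τ.image p = univ :=
      eq_univ_of_card _ (by rw [card_image_of_injOn hinj, hτ, Fintype.card_fin])
    obtain ⟨x, hx, rfl⟩ := mem_image.1 (himg ▸ mem_univ i)
    refine card_eq_one.2 ⟨x, eq_singleton_iff_unique_mem.2 ⟨mem_inter.2 ⟨hx, (hp x _).2 rfl⟩, ?_⟩⟩
    intro y hy
    obtain ⟨hyτ, hyA⟩ := mem_inter.1 hy
    exact hinj hyτ hx ((hp y _).1 hyA)

end Partition

section Completion

variable {V : Type*} [DecidableEq V] [Fintype V]

lemma faces_subset_faces_completion (X : Finset (Finset V)) (k c : ℕ) :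
    faces X c ⊆ faces (completion X k) c :=
  filter_subset_filter _ subset_union_left

lemma erase_mem_of_mem_faces_completion {X : Finset (Finset V)} (hX : IsComplex X) {k : ℕ}
    {τ : Finset V} (hτ : τ ∈ faces (completion X k) (k + 1)) {v : V} (hv : v ∈ τ) :
    τ.erase v ∈ X := by
  rcases mem_union.1 (mem_filter.1 hτ).1 with hτX | hτK
  · exact hX τ hτX _ (erase_subset v τ)
  · exact (mem_filter.1 hτK).2.2 v hv

lemma Cconst_le_of_bounded_degree {X : Finset (Finset V)} (hX : IsComplex X) {k : ℕ}
    {A : Fin (k + 1) → Finset V} {C : ℕ}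
    (hdeg : ∀ σ ∈ faces X k, #{τ ∈ faces (completion X k) (k + 1) | σ ⊆ τ} ≤ C) :
    Cconst X k A ≤ (k + 1) * C := by
  refine Finset.sup_le fun τ hτ => ?_
  have hτK : τ ∈ faces (completion X k) (k + 1) := filter_subset _ _ hτ
  have hτc : #τ = k + 1 := (mem_filter.1 hτK).2
  calc ∑ v ∈ τ, degPar X k A (τ.erase v) ≤ ∑ _v ∈ τ, C := by
        refine sum_le_sum fun v hv => ?_
        have hσ : τ.erase v ∈ faces X k := by
          refine mem_filter.2 ⟨erase_mem_of_mem_faces_completion hX hτK hv, ?_⟩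
          have := card_erase_add_one hv
          omega
        exact (card_le_card (filter_subset_filter _ (filter_subset _ _))).trans (hdeg _ hσ)
    _ = (k + 1) * C := by rw [sum_const, hτc, smul_eq_mul]

/-- Double counting: `∑_σ d(σ)² = ∑_{τ ∈ F^∂} ∑_{σ ⊂ τ} d(σ)`. -/
lemma sum_degPar_sq_le (X : Finset (Finset V)) (k : ℕ) (A : Fin (k + 1) → Finset V) :
    ∑ σ ∈ faces X k, degPar X k A σ ^ 2 ≤ Cconst X k A * #(Fpar X k A) := by
  have hswap : ∑ σ ∈ faces X k, degPar X k A σ ^ 2 =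
      ∑ τ ∈ Fpar X k A, ∑ σ ∈ faces X k with σ ⊆ τ, degPar X k A σ := by
    have hsq (σ : Finset V) :
        degPar X k A σ ^ 2 = ∑ τ ∈ Fpar X k A, if σ ⊆ τ then degPar X k A σ else 0 := by
      rw [← sum_filter, sum_const, smul_eq_mul, sq]
      rfl
    simp only [hsq, sum_filter]
    exact sum_comm
  rw [hswap, mul_comm, ← smul_eq_mul, ← sum_const]
  refine sum_le_sum fun τ hτ => ?_
  have hτc : #τ = k + 1 := (mem_filter.1 (filter_subset _ _ hτ)).2
  have hsub : {σ ∈ faces X k | σ ⊆ τ} ⊆ τ.image τ.erase := by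
    intro σ hσ
    obtain ⟨hσX, hστ⟩ := mem_filter.1 hσ
    obtain ⟨v, hv, rfl⟩ := exists_erase_eq ⟨hστ, by rw [(mem_filter.1 hσX).2, hτc]⟩
    exact mem_image_of_mem _ hv
  calc ∑ σ ∈ faces X k with σ ⊆ τ, degPar X k A σ
      ≤ ∑ σ ∈ τ.image τ.erase, degPar X k A σ := sum_le_sum_of_subset hsub
    _ = ∑ v ∈ τ, degPar X k A (τ.erase v) := sum_image (erase_injOn τ)
    _ ≤ Cconst X k A := le_sup (f := fun τ => ∑ v ∈ τ, degPar X k A (τ.erase v)) hτ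

end Completion

section SpectralGap

lemma inn_self_nonneg {V : Type*} (X : Finset (Finset V)) (c : ℕ) (f : Finset V → ℝ) :
    0 ≤ inn X c f f :=
  sum_nonneg fun _ _ => mul_self_nonneg _

variable {V : Type*} [DecidableEq V] [LinearOrder V]

lemma spectralGap_le_of_isCycle {X : Finset (Finset V)} {k : ℕ} {g : Finset V → ℝ}
    (hg : IsCycle X k g) (hg0 : inn X k g g ≠ 0) :
    spectralGap X k ≤ inn X (k + 1) (delta X k g) (delta X k g) / inn X k g g := by
  rw [← inn_lapUp_self]
  refine csInf_le ⟨0, ?_⟩ ⟨g, hg, hg0, rfl⟩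
  rintro _ ⟨f, -, -, rfl⟩
  rw [inn_lapUp_self]
  exact div_nonneg (inn_self_nonneg _ _ _) (inn_self_nonneg _ _ _)

variable [Fintype V]

lemma abs_sum_mul_incidence_le_degPar (X : Finset (Finset V)) (k : ℕ)
    (A : Fin (k + 1) → Finset V) {ε : Finset V → ℝ} (hε : ∀ τ, |ε τ| ≤ 1) (σ : Finset V) :
    |∑ τ ∈ Fpar X k A, ε τ * incidence τ σ| ≤ degPar X k A σ := by
  calc |∑ τ ∈ Fpar X k A, ε τ * incidence τ σ|
      ≤ ∑ τ ∈ Fpar X k A, |ε τ * incidence τ σ| := abs_sum_le_sum_abs _ _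
    _ ≤ ∑ τ ∈ Fpar X k A, if σ ⊆ τ then (1 : ℝ) else 0 := by
        refine sum_le_sum fun τ _ => ?_
        have h := abs_incidence_le τ σ
        rw [abs_mul]
        split_ifs at h ⊢
        · exact mul_le_one₀ (hε τ) (abs_nonneg _) h
        · rw [le_antisymm h (abs_nonneg _), mul_zero]
    _ = degPar X k A σ := by rw [sum_boole]; rfl

/-- Cauchy–Schwarz against the degrees `d(σ)`. -/
lemma sq_sum_mul_delta_le (X : Finset (Finset V)) (k : ℕ) (A : Fin (k + 1) → Finset V)
    {ε : Finset V → ℝ} (hε : ∀ τ, |ε τ| ≤ 1) (g : Finset V → ℝ) :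
    (∑ τ ∈ Fpar X k A, ε τ * delta X k g τ) ^ 2 ≤
      inn X k g g * (Cconst X k A * #(Fpar X k A)) := by
  have hswap : ∑ τ ∈ Fpar X k A, ε τ * delta X k g τ =
      ∑ σ ∈ faces X k, g σ * ∑ τ ∈ Fpar X k A, ε τ * incidence τ σ := by
    simp only [delta, mul_sum]
    rw [sum_comm]
    exact sum_congr rfl fun σ _ => sum_congr rfl fun τ _ => by ring
  have hdeg : (∑ σ ∈ faces X k, (degPar X k A σ : ℝ) ^ 2) ≤ Cconst X k A * #(Fpar X k A) := by
    exact_mod_cast sum_degPar_sq_le X k A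
  calc (∑ τ ∈ Fpar X k A, ε τ * delta X k g τ) ^ 2
      ≤ (∑ σ ∈ faces X k, |g σ| * degPar X k A σ) ^ 2 := by
        rw [hswap, ← sq_abs]
        refine pow_le_pow_left₀ (abs_nonneg _) ((abs_sum_le_sum_abs _ _).trans
          (sum_le_sum fun σ _ => ?_)) 2
        rw [abs_mul]
        exact mul_le_mul_of_nonneg_left (abs_sum_mul_incidence_le_degPar X k A hε σ) (abs_nonneg _)
    _ ≤ (∑ σ ∈ faces X k, |g σ| ^ 2) * ∑ σ ∈ faces X k, (degPar X k A σ : ℝ) ^ 2 :=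
        sum_mul_sq_le_sq_mul_sq _ _ _
    _ ≤ inn X k g g * (Cconst X k A * #(Fpar X k A)) := by
        rw [show ∑ σ ∈ faces X k, |g σ| ^ 2 = inn X k g g from
          sum_congr rfl fun σ _ => by rw [sq_abs, sq]]
        exact mul_le_mul_of_nonneg_left hdeg (inn_self_nonneg X k g)

lemma delta_labelCochain_card {X : Finset (Finset V)} (hX : IsComplex X) {k : ℕ}
    {A : Fin (k + 1) → Finset V} {p : V → Fin (k + 1)} (hp : ∀ v i, v ∈ A i ↔ p v = i)
    {τ : Finset V} (hτ : τ ∈ faces (completion X k) (k + 1)) :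
    delta X k (labelCochain p fun i => (#(A i) : ℝ)) τ =
      if ∀ i, #(τ ∩ A i) = 1 then (-1 : ℝ) ^ inversions p τ * (Fintype.card V : ℝ) else 0 := by
  have hτc : #τ = k + 1 := (mem_filter.1 hτ).2
  rw [delta_eq_sum_erase X k _ hτc fun v hv => erase_mem_of_mem_faces_completion hX hτ hv]
  by_cases hrainbow : ∀ i, #(τ ∩ A i) = 1
  · rw [if_pos hrainbow, sum_facetSign_mul_labelCochain_erase_of_injOn p _ hτc
      ((forall_card_inter_eq_one_iff hp hτc).1 hrainbow), ← sum_card_eq_card_of_label hp]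
    push_cast
    rfl
  · rw [if_neg hrainbow]
    exact sum_facetSign_mul_labelCochain_erase_of_not_injOn p _
      (mt (forall_card_inter_eq_one_iff hp hτc).2 hrainbow)

lemma exists_isCycle_delta_eq {X : Finset (Finset V)} (hX : IsComplex X) {k : ℕ}
    {A : Fin (k + 1) → Finset V} (hA : IsPartition A) :
    ∃ g, IsCycle X k g ∧ ∃ ε : Finset V → ℝ, (∀ τ, |ε τ| = 1) ∧
      ∀ τ ∈ faces (completion X k) (k + 1),
        delta X k g τ = if ∀ i, #(τ ∩ A i) = 1 then ε τ * Fintype.card V else 0 := by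
  obtain ⟨p, hp⟩ := hA.exists_label
  obtain ⟨h, hg⟩ := exists_isCycle_sub_delta hX k (labelCochain p fun i => (#(A i) : ℝ))
  refine ⟨_, hg, fun τ => (-1) ^ inversions p τ, fun τ => by simp, fun τ hτ => ?_⟩
  rw [delta_sub, Pi.sub_apply, delta_delta_eq_zero X k (k - 1) h (mem_filter.1 hτ).2
    fun v hv => erase_mem_of_mem_faces_completion hX hτ hv, sub_zero,
    delta_labelCochain_card hX hp hτ]

theorem spectralGap_le_Cconst_div_mul {X : Finset (Finset V)} (hX : IsComplex X) {k : ℕ}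
    {A : Fin (k + 1) → Finset V} (hA : IsPartition A) (hF : (Fpar X k A).Nonempty) :
    spectralGap X k ≤ Cconst X k A / Fintype.card V *
      (Fintype.card V * #(Fset X k A) / #(Fpar X k A)) := by
  obtain ⟨g, hg, ε, hε, hδg⟩ := exists_isCycle_delta_eq hX hA
  set n : ℝ := (Fintype.card V : ℝ)
  have hε_sq (τ : Finset V) : ε τ ^ 2 = 1 := by rw [← sq_abs, hε, one_pow]
  have hnum : inn X (k + 1) (delta X k g) (delta X k g) = n ^ 2 * #(Fset X k A) := by
    rw [inn, Fset, card_eq_sum_ones, Nat.cast_sum, mul_sum, sum_filter]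
    refine sum_congr rfl fun τ hτ => ?_
    rw [hδg τ (faces_subset_faces_completion X k _ hτ)]
    split_ifs
    · rw [← sq, mul_pow, hε_sq, one_mul, Nat.cast_one, mul_one]
    · simp
  have hpair : ∑ τ ∈ Fpar X k A, ε τ * delta X k g τ = n * #(Fpar X k A) := by
    rw [sum_congr rfl fun τ hτ => by
      rw [hδg τ (filter_subset _ _ hτ), if_pos (mem_filter.1 hτ).2, ← mul_assoc, ← sq, hε_sq,
        one_mul], sum_const, nsmul_eq_mul, mul_comm]
  have hCS := sq_sum_mul_delta_le X k A (fun τ => (hε τ).le) g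
  rw [hpair] at hCS
  have hn : 0 < n := by
    obtain ⟨τ, hτ⟩ := hF
    obtain ⟨v, -⟩ := card_pos.1 (by rw [(mem_filter.1 (filter_subset _ _ hτ)).2]; omega)
    exact Nat.cast_pos.2 (Fintype.card_pos_iff.2 ⟨v⟩)
  have hFpos : (0 : ℝ) < #(Fpar X k A) := by exact_mod_cast hF.card_pos
  have hQ : 0 < inn X k g g := (inn_self_nonneg X k g).lt_of_ne fun h0 => by
    rw [← h0, zero_mul] at hCS
    exact absurd hCS (not_le.2 (by positivity))
  have hkey : n ^ 2 * #(Fpar X k A) ≤ inn X k g g * Cconst X k A :=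
    le_of_mul_le_mul_right (by nlinarith [hCS]) hFpos
  calc spectralGap X k ≤ n ^ 2 * #(Fset X k A) / inn X k g g :=
        hnum ▸ spectralGap_le_of_isCycle hg hQ.ne'
    _ ≤ Cconst X k A / n * (n * #(Fset X k A) / #(Fpar X k A)) := by
        rw [div_mul_div_comm, div_le_div_iff₀ hQ (mul_pos hn hFpos)]
        nlinarith [mul_le_mul_of_nonneg_right hkey (by positivity : (0 : ℝ) ≤ n * #(Fset X k A))]

theorem spectralGap_le_of_bounded_degree_general
    {V : Type*} [DecidableEq V] [Fintype V] [LinearOrder V]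
    (X : Finset (Finset V)) (k : ℕ)
    (hX : IsComplex X)
    (hfin : cheeger X k < ⊤)
    (A : Fin (k + 1) → Finset V) (hA : IsPartition A)
    (hmin : cheegerVal X k A = cheeger X k)
    (C : ℕ)
    (hdeg : ∀ σ ∈ faces X k,
      ((faces (completion X k) (k + 1)).filter fun τ => σ ⊆ τ).card ≤ C) :
    Cconst X k A ≤ (k + 1) * C ∧
      (spectralGap X k : EReal) ≤
        ((((k + 1) * C : ℝ) / (Fintype.card V : ℝ) : ℝ) : EReal) * cheeger X k := by
  have hF : (Fpar X k A).Nonempty := by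
    rw [← card_ne_zero]
    intro h0
    rw [← hmin, cheegerVal, if_pos h0] at hfin
    exact lt_irrefl _ hfin
  have hC := Cconst_le_of_bounded_degree (A := A) hX hdeg
  refine ⟨hC, ?_⟩
  rw [← hmin, cheegerVal, if_neg (card_ne_zero.2 hF), ← EReal.coe_mul, EReal.coe_le_coe_iff]
  refine (spectralGap_le_Cconst_div_mul hX hA hF).trans ?_
  gcongr
  exact_mod_cast hC

/-- **Theorem 2, bounded-degree form.**  If moreover every `(k-1)`-face of `X` is contained
in at most `C` faces of dimension `k` of the completion `K(X)`, then `C(X) ≤ (k+1)·C` and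
consequently `λ(X) ≤ ((k+1)·C/|V|)·h(X)`. -/
theorem spectralGap_le_of_bounded_degree
    {V : Type*} [DecidableEq V] [Fintype V] [LinearOrder V]
    (X : Finset (Finset V)) (k : ℕ)
    (hX : IsComplex X) (hdim : IsDim X k)
    (hZ : ∃ f : Finset V → ℝ, IsCycle X k f ∧ inn X k f f ≠ 0)
    (hfin : cheeger X k < ⊤)
    (A : Fin (k + 1) → Finset V) (hA : IsPartition A)
    (hmin : cheegerVal X k A = cheeger X k)
    (C : ℕ)
    (hdeg : ∀ σ ∈ faces X k,
      ((faces (completion X k) (k + 1)).filter fun τ => σ ⊆ τ).card ≤ C) :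
    Cconst X k A ≤ (k + 1) * C ∧
      (spectralGap X k : EReal) ≤
        ((((k + 1) * C : ℝ) / (Fintype.card V : ℝ) : ℝ) : EReal) * cheeger X k :=
  spectralGap_le_of_bounded_degree_general X k hX hfin A hA hmin C hdeg

end SpectralGap

end HigherCheeger
end

section
/- For every k-dimensional simplicial complex X on a finite vertex set V, h'(X) ≤ h(X). -/
open Finset

/-!
Given a partition `A₀, …, A_k` of `V`, merge `A_{k-1}` and `A_k` into one part and let `f` be the
indicator of the `(k-1)`-faces meeting each of `A₀, …, A_{k-1}` exactly once; such a face misses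
`A_k`, so `f` is supported on `F` of the merged partition. For a `(k+1)`-set `τ` all of whose
facets lie in `X`, `δf(τ)` counts the `v ∈ τ` for which `τ ∖ {v}` meets each of
`A₀, …, A_{k-1}` once. If `τ` meets every `A_i` once there is exactly one such `v`, the vertex of
`τ` in `A_k`; otherwise there is none, or `τ` has two vertices in one `A_j` (`j < k`) and these
are the two choices of `v`. Hence `δ_X f = F(A₀,…,A_k)` and `δ_{K(X)} f = F^∂(A₀,…,A_k)`, and `f`
realises in `h'(X)` the quotient of `A` in `h(X)`.
-/

namespace HigherCheeger

/-- With `c j` the number of vertices of `τ` in `A_j`, the `j`-th summand counts the `v ∈ A_j`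
whose removal leaves one vertex of `τ` in each of `A₀, …, A_{k-1}`. -/
lemma odd_sum_ite_iff_forall_eq_one {k : ℕ} (c : Fin (k + 1) → ℕ) (hc : ∑ j, c j = k + 1) :
    Odd (∑ j, if ∀ i : Fin k, c i.castSucc = if j = i.castSucc then 2 else 1 then c j else 0) ↔
      ∀ j, c j = 1 := by
  rw [Fin.sum_univ_castSucc] at hc ⊢
  have h_even : Even (∑ j : Fin k,
      if ∀ i : Fin k, c i.castSucc = if j.castSucc = i.castSucc then 2 else 1
      then c j.castSucc else 0) := by
    refine even_sum _ fun j _ => ?_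
    split_ifs with h
    · simp [h j]
    · exact Even.zero
  have h_last : (∀ i : Fin k, c i.castSucc = 1) → c (Fin.last k) = 1 := fun h => by
    simp only [h, sum_const, card_univ, Fintype.card_fin, smul_eq_mul, mul_one] at hc
    omega
  simp only [(Fin.castSucc_ne_last _).symm, if_false, Nat.odd_add, Nat.not_odd_iff_even.2 h_even,
    false_iff, Nat.not_even_iff_odd]
  constructor
  · intro hodd
    split_ifs at hodd with h
    · exact Fin.lastCases (h_last h) h
    · exact absurd hodd Nat.not_odd_zero
  · intro h
    rw [if_pos fun i => h _, h]
    exact odd_one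

lemma sum_card_filter_eq_card {α : Type*} {m : ℕ} (s : Finset α) (p : α → Fin m) :
    ∑ j, #{v ∈ s | p v = j} = s.card :=
  (card_eq_sum_card_fiberwise fun _ _ => mem_univ _).symm

variable {V : Type*}

section Fibers

variable [Fintype V] {m : ℕ}

def fibers (p : V → Fin m) (i : Fin m) : Finset V := {v | p v = i}

@[simp] lemma mem_fibers {p : V → Fin m} {i : Fin m} {v : V} : v ∈ fibers p i ↔ p v = i := by
  simp [fibers]

lemma isPartition_fibers {p : V → Fin m} (hp : Function.Surjective p) :
    IsPartition (fibers p) :=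
  ⟨fun i => (hp i).imp fun _ hv => mem_fibers.2 hv,
    fun v => ⟨p v, mem_fibers.2 rfl, fun _ hi => (mem_fibers.1 hi).symm⟩⟩

lemma IsPartition.exists_surjective_eq_fibers {A : Fin m → Finset V} (hA : IsPartition A) :
    ∃ p : V → Fin m, Function.Surjective p ∧ A = fibers p := by
  choose p hp hp_unique using hA.2
  refine ⟨p, fun i => ?_, funext fun i => ?_⟩
  · obtain ⟨v, hv⟩ := hA.1 i
    exact ⟨v, (hp_unique v i hv).symm⟩
  · ext v
    exact ⟨fun hv => mem_fibers.2 (hp_unique v i hv).symm, fun hv => mem_fibers.1 hv ▸ hp v⟩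

end Fibers

variable [DecidableEq V]

def IsTransversal {m : ℕ} (A : Fin m → Finset V) (s : Finset V) : Prop :=
  ∀ i, (s ∩ A i).card = 1

/-- Built with `inferInstanceAs` so that it is definitionally the instance elaborated in `Fset`
and `Fpar`; `Fintype.decidableForallFintype` would not be. -/
instance {m : ℕ} (A : Fin m → Finset V) : DecidablePred (IsTransversal A) :=
  fun s => inferInstanceAs (Decidable (∀ i, (s ∩ A i).card = 1))

lemma deltaZ2_indicator_FsetLow {X : Finset (Finset V)} {k : ℕ} {B : Fin k → Finset V}
    {τ : Finset V} (hτ : τ.card = k + 1) (h_facets : ∀ v ∈ τ, τ.erase v ∈ X) :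
    deltaZ2 ((FsetLow X k B : Set (Finset V)).indicator 1) τ =
      #{v ∈ τ | IsTransversal B (τ.erase v)} := by
  rw [deltaZ2, ← sum_boole]
  refine sum_congr rfl fun v hv => ?_
  simp [Set.indicator_apply, FsetLow, faces, h_facets v hv, card_erase_of_mem hv, hτ,
    IsTransversal]

variable [Fintype V]

lemma erase_mem_of_mem_completion {X : Finset (Finset V)} (hX : IsComplex X) {k : ℕ}
    {τ : Finset V} (hτ : τ ∈ completion X k) {v : V} (hv : v ∈ τ) : τ.erase v ∈ X := by
  rcases mem_union.1 hτ with hτX | hτK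
  · exact hX τ hτX _ (erase_subset v τ)
  · exact (mem_filter.1 hτK).2.2 v hv

lemma inter_fibers {m : ℕ} (s : Finset V) (p : V → Fin m) (i : Fin m) :
    s ∩ fibers p i = {v ∈ s | p v = i} := by
  ext; simp

variable {k : ℕ} {p : V → Fin (k + 1)}

lemma isTransversal_erase_iff {τ : Finset V} {v : V} (hv : v ∈ τ) :
    IsTransversal (fibers p ∘ Fin.castSucc) (τ.erase v) ↔
      ∀ i : Fin k, #{w ∈ τ | p w = i.castSucc} = if p v = i.castSucc then 2 else 1 := by
  refine forall_congr' fun i => ?_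
  rw [Function.comp_apply, erase_inter, inter_fibers, card_erase_eq_ite]
  simp only [mem_filter, hv, true_and]
  split_ifs <;> omega

lemma odd_card_filter_isTransversal_erase_iff {τ : Finset V} (hτ : τ.card = k + 1) :
    Odd #{v ∈ τ | IsTransversal (fibers p ∘ Fin.castSucc) (τ.erase v)} ↔
      IsTransversal (fibers p) τ := by
  set c : Fin (k + 1) → ℕ := fun j => #{w ∈ τ | p w = j}
  have h_count : #{v ∈ τ | IsTransversal (fibers p ∘ Fin.castSucc) (τ.erase v)} =
      ∑ j, if ∀ i : Fin k, c i.castSucc = if j = i.castSucc then 2 else 1 then c j else 0 := by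
    rw [card_filter, ← sum_fiberwise τ p]
    refine sum_congr rfl fun j _ => ?_
    have h_fiber : ∀ v ∈ τ.filter (p · = j),
        (if IsTransversal (fibers p ∘ Fin.castSucc) (τ.erase v) then 1 else 0) =
          if ∀ i : Fin k, c i.castSucc = if j = i.castSucc then 2 else 1 then 1 else 0 := by
      intro v hv
      rw [mem_filter] at hv
      simp only [isTransversal_erase_iff hv.1, hv.2, c]
    rw [sum_congr rfl h_fiber, sum_const, smul_eq_mul, mul_ite, mul_one, mul_zero]
  rw [h_count, odd_sum_ite_iff_forall_eq_one c ((sum_card_filter_eq_card τ p).trans hτ)]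
  simp [IsTransversal, inter_fibers, c]

lemma isTransversal_fibers_comp {φ : Fin (k + 1) → Fin k}
    (hφ : Function.LeftInverse φ Fin.castSucc) {σ : Finset V} (hσ : σ.card = k)
    (hσA : IsTransversal (fibers p ∘ Fin.castSucc) σ) : IsTransversal (fibers (φ ∘ p)) σ := by
  have h_last : ∀ v ∈ σ, p v ≠ Fin.last k := by
    have h := sum_card_filter_eq_card σ p
    simp only [IsTransversal, Function.comp_apply, inter_fibers] at hσA
    simpa only [Fin.sum_univ_castSucc, hσA, sum_const, card_univ, Fintype.card_fin, smul_eq_mul,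
      mul_one, hσ, add_eq_left, card_eq_zero, filter_eq_empty_iff] using h
  intro i
  convert hσA i using 2
  ext v
  simp only [inter_fibers, mem_filter, Function.comp_apply, and_congr_right_iff]
  intro hv
  obtain ⟨j, hj⟩ := Fin.exists_castSucc_eq.2 (h_last v hv)
  rw [← hj, hφ, Fin.castSucc_inj]

lemma suppDelta_indicator_FsetLow {X Y : Finset (Finset V)}
    (hY : ∀ τ ∈ Y, ∀ v ∈ τ, τ.erase v ∈ X) :
    suppDelta Y k ((FsetLow X k (fibers p ∘ Fin.castSucc) : Set (Finset V)).indicator 1) =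
      {τ ∈ faces Y (k + 1) | IsTransversal (fibers p) τ} := by
  refine filter_congr fun τ hτ => ?_
  rw [faces, mem_filter] at hτ
  rw [deltaZ2_indicator_FsetLow hτ.2 (hY τ hτ.1), ZMod.natCast_ne_zero_iff_odd,
    odd_card_filter_isTransversal_erase_iff hτ.2]

theorem cheeger'_le_cheeger_general
    {V : Type*} [DecidableEq V] [Fintype V]
    (X : Finset (Finset V)) (k : ℕ) (hk : 1 ≤ k)
    (hX : IsComplex X) :
    cheeger' X k ≤ cheeger X k := by
  refine sInf_le_sInf ?_
  rintro _ ⟨A, hA, rfl⟩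
  obtain ⟨p, hp, rfl⟩ := hA.exists_surjective_eq_fibers
  obtain ⟨φ, hφ⟩ : ∃ φ : Fin (k + 1) → Fin k, Function.LeftInverse φ Fin.castSucc :=
    ⟨fun i => ⟨min i (k - 1), by omega⟩, fun i => Fin.ext (by simp; omega)⟩
  have h_facets (Y) (hY : Y ⊆ completion X k) : ∀ τ ∈ Y, ∀ v ∈ τ, τ.erase v ∈ X :=
    fun τ hτ _ hv => erase_mem_of_mem_completion hX (hY hτ) hv
  refine ⟨fibers (φ ∘ p), (FsetLow X k (fibers p ∘ Fin.castSucc) : Set (Finset V)).indicator 1,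
    isPartition_fibers (hφ.surjective.comp hp), fun σ hσ => ?_, ?_⟩
  · obtain ⟨hσX, hσA⟩ := mem_filter.1 (Set.mem_of_indicator_ne_zero hσ)
    exact mem_filter.2 ⟨hσX, isTransversal_fibers_comp hφ (mem_filter.1 hσX).2 hσA⟩
  · rw [suppDelta_indicator_FsetLow (h_facets X subset_union_left),
      suppDelta_indicator_FsetLow (h_facets _ subset_rfl)]
    rfl

/-- For every `k`-dimensional simplicial complex `X` (`k ≥ 1`), `h'(X) ≤ h(X)`. -/
theorem cheeger'_le_cheeger
    {V : Type*} [DecidableEq V] [Fintype V] [LinearOrder V]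
    (X : Finset (Finset V)) (k : ℕ) (hk : 1 ≤ k)
    (hX : IsComplex X) (hdim : IsDim X k) :
    cheeger' X k ≤ cheeger X k :=
  cheeger'_le_cheeger_general X k hk hX

end HigherCheeger
end
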